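/- Let G be a graph, F a set of positively oriented edges of G, t ≥ 2, and α ∈ M_t(F). Then the number of closed walks of length l on G whose abelianization mod t restricts to α on F equals (1/t^{|F|}) Σ_{γ ∈ M_t(F)} ε_t^{-⟨γ,α⟩} trace(A_γ^l). -/

import Mathlib

open Finset Matrix

variable {V E : Type}

/-- Initial vertex of an oriented edge `(e, b)`; `b = true` means positively oriented. -/
def einit (vs vt : E → V) (a : E × Bool) : V := if a.2 then vs a.1 else vt a.1

/-- Terminal vertex of an oriented edge. -/
def eterm (vs vt : E → V) (a : E × Bool) : V := if a.2 then vt a.1 else vs a.1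

/-- Inverse (opposite) oriented edge. -/
def einv (a : E × Bool) : E × Bool := (a.1, !a.2)

/-- A closed walk of length `l` on the multigraph, recorded cyclically. -/
abbrev IsClosedWalk (vs vt : E → V) {l : ℕ} (a : ZMod l → E × Bool) : Prop :=
  ∀ i, eterm vs vt (a i) = einit vs vt (a (i + 1))

/-- A circuit: a closed walk without backtracks or tail. -/
abbrev IsCircuit (vs vt : E → V) {l : ℕ} (a : ZMod l → E × Bool) : Prop :=
  IsClosedWalk vs vt a ∧ ∀ i, a (i + 1) ≠ einv (a i)

/-- The abelianization of a closed walk, as an integer vector over edges. -/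
def abel [Fintype E] [DecidableEq E] {l : ℕ} [NeZero l]
    (a : ZMod l → E × Bool) (e : E) : ℤ :=
  ∑ i : ZMod l, if (a i).1 = e then (if (a i).2 then (1 : ℤ) else -1) else 0

/-- The vertex adjacency matrix (counting oriented edges from `v` to `w`). -/
def vertAdj [Fintype E] [DecidableEq V] (vs vt : E → V) : Matrix V V ℕ :=
  Matrix.of fun v w =>
    (univ.filter fun a : E × Bool => einit vs vt a = v ∧ eterm vs vt a = w).card

/-- Oriented edge `a` feeds into `b`. -/
abbrev Feeds (vs vt : E → V) (a b : E × Bool) : Prop :=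
  b ≠ einv a ∧ eterm vs vt a = einit vs vt b

/-- The edge adjacency matrix `W₁`. -/
def edgeAdj [DecidableEq V] [DecidableEq E] (vs vt : E → V) :
    Matrix (E × Bool) (E × Bool) ℕ :=
  Matrix.of fun a b => if Feeds vs vt a b then 1 else 0

/-- `ε_t = exp(2πi/t)`, a primitive `t`-th root of unity. -/
noncomputable def zetat (t : ℕ) : ℂ := Complex.exp (2 * Real.pi * Complex.I / t)

/-- The signed exponent `⟨γ, 1·e⟩` of an oriented edge. -/
def oexp {t : ℕ} (γ : E → ZMod t) (a : E × Bool) : ℤ :=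
  if a.2 then ((γ a.1).val : ℤ) else -((γ a.1).val : ℤ)

/-- The twisted vertex adjacency matrix `A_γ`. -/
noncomputable def twistedVertAdj [Fintype E] [DecidableEq V] (vs vt : E → V)
    (t : ℕ) (γ : E → ZMod t) : Matrix V V ℂ :=
  Matrix.of fun v w =>
    ∑ a : E × Bool, if einit vs vt a = v ∧ eterm vs vt a = w then zetat t ^ oexp γ a else 0

/-- The twisted edge adjacency matrix `W_{1,γ}`. -/
noncomputable def twistedEdgeAdj [DecidableEq V] [DecidableEq E] (vs vt : E → V)
    (t : ℕ) (γ : E → ZMod t) : Matrix (E × Bool) (E × Bool) ℂ :=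
  Matrix.of fun a b => if Feeds vs vt a b then zetat t ^ oexp γ a else 0

/-- The twisted vertex adjacency matrix for `t = 2`, with `±1` entries. -/
noncomputable def twistedVertAdj2 [Fintype E] [DecidableEq V] (vs vt : E → V)
    (γ : E → ZMod 2) : Matrix V V ℂ :=
  Matrix.of fun v w =>
    ∑ a : E × Bool, if einit vs vt a = v ∧ eterm vs vt a = w then (-1 : ℂ) ^ (γ a.1).val else 0

/-- Extension by zero of an element of `M_t(F)` to all edges. -/
def extF [DecidableEq E] {t : ℕ} (F : Finset E) (γ : {e : E // e ∈ F} → ZMod t) (e : E) :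
    ZMod t := if h : e ∈ F then γ ⟨e, h⟩ else 0

/-- Extension by zero of an element of `M_t(E^c(T))` to all edges. -/
def extC [DecidableEq E] {t : ℕ} (T : Finset E) (γ : {e : E // e ∉ T} → ZMod t) (e : E) :
    ZMod t := if h : e ∈ T then 0 else γ ⟨e, h⟩

/-- Reachability using only edges from the set `F` (edges traversable both ways). -/
def Reach (vs vt : E → V) (F : Finset E) : V → V → Prop :=
  Relation.ReflTransGen (fun v w => ∃ e ∈ F, (vs e = v ∧ vt e = w) ∨ (vs e = w ∧ vt e = v))

/-- Degree of a vertex (loops counted twice). -/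
def degree [Fintype E] [DecidableEq V] (vs vt : E → V) (v : V) : ℕ :=
  (univ.filter fun e => vs e = v).card + (univ.filter fun e => vt e = v).card

/-- `α` is an `R`-circulation: balanced at every vertex. -/
def IsCirc [Fintype E] [DecidableEq V] (vs vt : E → V) {R : Type} [AddCommMonoid R]
    (α : E → R) : Prop :=
  ∀ v, ∑ e ∈ univ.filter (fun e => vs e = v), α e = ∑ e ∈ univ.filter (fun e => vt e = v), α e

/-- `T` is a spanning tree: its edges connect all vertices and `|T| = |V| - 1`. -/
def IsSpanningTree [Fintype V] (vs vt : E → V) (T : Finset E) : Prop :=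
  (∀ v w : V, Reach vs vt T v w) ∧ T.card + 1 = Fintype.card V

/-- The vertex-edge incidence matrix. -/
def incidence (R : Type) [Ring R] [DecidableEq V] (vs vt : E → V) : Matrix V E R :=
  Matrix.of fun v e => (if vs e = v then (1 : R) else 0) - (if vt e = v then 1 else 0)

/-- An Eulerian circuit: a closed walk using every edge exactly once. -/
abbrev IsEulerianCircuit [Fintype E] (vs vt : E → V) (a : ZMod (Fintype.card E) → E × Bool) :
    Prop :=
  IsClosedWalk vs vt a ∧ Function.Bijective (fun i => (a i).1)

/-- Eulerian circuits up to cyclic rotation (Eulerian cycles). -/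
def eulSetoid [Fintype E] (vs vt : E → V) :
    Setoid {a : ZMod (Fintype.card E) → E × Bool // IsEulerianCircuit vs vt a} where
  r a b := ∃ k, ∀ i, b.1 i = a.1 (i + k)
  iseqv := by
    refine ⟨fun a => ⟨0, fun i => by rw [add_zero]⟩, ?_, ?_⟩
    · rintro a b ⟨k, h⟩
      exact ⟨-k, fun i => by rw [h (i + -k), neg_add_cancel_right]⟩
    · rintro a b c ⟨k, h⟩ ⟨k', h'⟩
      exact ⟨k' + k, fun i => by rw [h' i, h (i + k'), add_assoc]⟩

instance [Fintype E] [DecidableEq E] [DecidableEq V] [NeZero (Fintype.card E)]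
    (vs vt : E → V) : DecidableRel (eulSetoid vs vt).r :=
  fun a b => inferInstanceAs (Decidable (∃ k, ∀ i, b.1 i = a.1 (i + k)))

instance [Fintype E] [DecidableEq E] [DecidableEq V] [NeZero (Fintype.card E)]
    (vs vt : E → V) : Fintype (Quotient (eulSetoid vs vt)) :=
  @Quotient.fintype _ _ (eulSetoid vs vt)
    (fun a b => inferInstanceAs (Decidable (∃ k, ∀ i, b.1 i = a.1 (i + k))))

/-!
Write `ψ` for the standard additive character `j ↦ ε_t ^ j` of `ZMod t`. Expanding
`trace (A_γ ^ l)` over cyclic vertex sequences, only closed walks survive, and a closed walk `a`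
contributes `ψ ⟨γ, ab(a)⟩` because the twist is multiplicative along the walk. By orthogonality of
characters, `∑_γ ψ ⟨γ, ab(a) - α⟩` is `t ^ |F|` when `ab(a)` restricts to `α` on `F` and `0`
otherwise, so after swapping the sums the right-hand side counts exactly the required walks.
-/

theorem AddChar.map_sum_eq_prod {A M ι : Type*} [AddCommMonoid A] [CommMonoid M]
    (ψ : AddChar A M) (s : Finset ι) (f : ι → A) : ψ (∑ i ∈ s, f i) = ∏ i ∈ s, ψ (f i) :=
  map_prod ψ.toMonoidHom (fun i => Multiplicative.ofAdd (f i)) s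

theorem AddChar.sum_pi_mulShift {R R' ι : Type*} [CommRing R] [Fintype R] [DecidableEq R]
    [CommRing R'] [IsDomain R'] [Fintype ι] [DecidableEq ι] {ψ : AddChar R R'}
    (hψ : ψ.IsPrimitive) (d : ι → R) :
    ∑ γ : ι → R, ψ (∑ i, γ i * d i) =
      if d = 0 then (Fintype.card R : R') ^ Fintype.card ι else 0 := by
  simp_rw [AddChar.map_sum_eq_prod]
  rw [← Fintype.prod_sum fun i c => ψ (c * d i)]
  simp_rw [AddChar.sum_mulShift _ hψ, Nat.cast_ite, Nat.cast_zero]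
  rw [Finset.prod_ite_zero]
  simp [funext_iff]

theorem AddChar.sum_neg_mulShift_mul_mulShift {R R' ι : Type*} [CommRing R] [Fintype R]
    [DecidableEq R] [CommRing R'] [IsDomain R'] [Fintype ι] [DecidableEq ι] {ψ : AddChar R R'}
    (hψ : ψ.IsPrimitive) (x α : ι → R) :
    ∑ γ : ι → R, ψ (-∑ i, γ i * α i) * ψ (∑ i, γ i * x i) =
      if x = α then (Fintype.card R : R') ^ Fintype.card ι else 0 := by
  have hsub : ∀ γ : ι → R, -∑ i, γ i * α i + ∑ i, γ i * x i = ∑ i, γ i * (x - α) i := by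
    intro γ
    simp only [Pi.sub_apply, mul_sub, Finset.sum_sub_distrib]
    ring
  simp_rw [← AddChar.map_add_eq_mul, hsub, AddChar.sum_pi_mulShift hψ, sub_eq_zero]

section CyclicTrace

variable {ι R : Type*} [Fintype ι] [DecidableEq ι] [CommSemiring R]

theorem Matrix.pow_succ_apply_eq_sum (B : Matrix ι ι R) (n : ℕ) (i j : ι) :
    (B ^ (n + 1)) i j = ∑ v : Fin (n + 1) → ι,
      if v 0 = i then (∏ k : Fin n, B (v k.castSucc) (v k.succ)) * B (v (Fin.last n)) j
      else 0 := by
  induction n generalizing j with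
  | zero =>
    rw [← (Equiv.funUnique (Fin 1) ι).symm.sum_comp]
    simp
  | succ n ih =>
    rw [pow_succ, mul_apply, ← (Fin.snocEquiv fun _ => ι).sum_comp, Fintype.sum_prod_type]
    simp_rw [ih, Finset.sum_mul]
    refine Finset.sum_congr rfl fun x _ => Finset.sum_congr rfl fun v _ => ?_
    have h0 : (Fin.snoc v x : Fin (n + 2) → ι) 0 = v 0 := Fin.snoc_castSucc (α := fun _ => ι) x v 0
    simp only [ite_mul, zero_mul, Fin.snocEquiv_apply, h0, Fin.prod_univ_castSucc,
      Fin.succ_castSucc, Fin.snoc_castSucc, Fin.succ_last, Fin.snoc_last]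

theorem Matrix.trace_pow_eq_sum_cyclic (B : Matrix ι ι R) (l : ℕ) [NeZero l] :
    trace (B ^ l) = ∑ v : ZMod l → ι, ∏ k : ZMod l, B (v k) (v (k + 1)) := by
  obtain ⟨m, rfl⟩ := Nat.exists_eq_succ_of_ne_zero (NeZero.ne l)
  change trace (B ^ (m + 1)) = ∑ v : Fin (m + 1) → ι, ∏ k : Fin (m + 1), B (v k) (v (k + 1))
  simp_rw [trace, diag, pow_succ_apply_eq_sum]
  rw [Finset.sum_comm]
  refine Finset.sum_congr rfl fun v _ => ?_
  rw [Fintype.sum_ite_eq, Fin.prod_univ_castSucc, Fin.last_add_one]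
  simp only [Fin.coeSucc_eq_succ]

theorem Matrix.trace_pow_of_arcs {A : Type*} [Fintype A] (src tgt : A → ι) (w : A → R)
    (l : ℕ) [NeZero l] :
    trace ((of fun i j => ∑ a, if src a = i ∧ tgt a = j then w a else 0) ^ l) =
      ∑ a : ZMod l → A, if ∀ k, tgt (a k) = src (a (k + 1)) then ∏ k, w (a k) else 0 := by
  rw [trace_pow_eq_sum_cyclic]
  simp_rw [of_apply, Fintype.prod_sum]
  rw [Finset.sum_comm]
  refine Finset.sum_congr rfl fun a _ => ?_
  have hforced : ∀ v : ZMod l → ι, (∀ k, src (a k) = v k ∧ tgt (a k) = v (k + 1)) ↔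
      v = (src ∘ a) ∧ ∀ k, tgt (a k) = src (a (k + 1)) := by
    refine fun v => ⟨fun h => ⟨funext fun k => (h k).1.symm, fun k => ?_⟩, ?_⟩
    · rw [(h k).2, (h (k + 1)).1]
    · rintro ⟨rfl, hclosed⟩ k
      exact ⟨rfl, hclosed k⟩
  simp_rw [Finset.prod_ite_zero, Finset.mem_univ, true_implies, hforced, ite_and]
  exact Fintype.sum_ite_eq' _ _

end CyclicTrace

theorem zetat_zpow {t : ℕ} [NeZero t] (n : ℤ) : zetat t ^ n = ZMod.stdAddChar (n : ZMod t) := by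
  rw [ZMod.stdAddChar_coe, zetat, ← Complex.exp_int_mul]
  ring_nf

theorem intCast_oexp {t : ℕ} [NeZero t] (γ : E → ZMod t) (a : E × Bool) :
    ((oexp γ a : ℤ) : ZMod t) = γ a.1 * if a.2 then 1 else -1 := by
  obtain ⟨e, _ | _⟩ := a <;> simp [oexp]

theorem sum_mul_abel [Fintype E] [DecidableEq E] {t l : ℕ} [NeZero l] (γ : E → ZMod t)
    (a : ZMod l → E × Bool) :
    ∑ e, γ e * (abel a e : ZMod t) = ∑ k, γ (a k).1 * if (a k).2 then 1 else -1 := by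
  simp_rw [abel, Int.cast_sum, Finset.mul_sum]
  rw [Finset.sum_comm]
  refine Finset.sum_congr rfl fun k _ => ?_
  push_cast
  simp_rw [mul_ite, mul_zero]
  rw [Fintype.sum_ite_eq]

theorem prod_zetat_pow_oexp [Fintype E] [DecidableEq E] {t l : ℕ} [NeZero t] [NeZero l]
    (γ : E → ZMod t) (a : ZMod l → E × Bool) :
    ∏ k, zetat t ^ oexp γ (a k) = ZMod.stdAddChar (∑ e, γ e * (abel a e : ZMod t)) := by
  simp_rw [zetat_zpow, intCast_oexp, sum_mul_abel, AddChar.map_sum_eq_prod]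

theorem trace_twistedVertAdj_pow [Fintype V] [DecidableEq V] [Fintype E] [DecidableEq E]
    (vs vt : E → V) {t : ℕ} [NeZero t] (γ : E → ZMod t) (l : ℕ) [NeZero l] :
    trace (twistedVertAdj vs vt t γ ^ l) =
      ∑ a : ZMod l → E × Bool,
        if IsClosedWalk vs vt a then ZMod.stdAddChar (∑ e, γ e * (abel a e : ZMod t)) else 0 := by
  simp_rw [twistedVertAdj, trace_pow_of_arcs, prod_zetat_pow_oexp]

theorem sum_extF_mul [Fintype E] [DecidableEq E] {t : ℕ} (F : Finset E)
    (γ : {e : E // e ∈ F} → ZMod t) (x : E → ZMod t) :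
    ∑ e, extF F γ e * x e = ∑ e : {e : E // e ∈ F}, γ e * x e := by
  rw [← Finset.sum_subset (Finset.subset_univ F) fun e _ he => by simp [extF, he],
    ← Finset.sum_coe_sort]
  simp [extF]

theorem stmt8_general {V E : Type} [Fintype V] [Fintype E] [DecidableEq V] [DecidableEq E]
    (vs vt : E → V) (t : ℕ) [NeZero t]
    (F : Finset E) (α : {e : E // e ∈ F} → ZMod t) (l : ℕ) [NeZero l] :
    (Fintype.card {a : ZMod l → E × Bool // IsClosedWalk vs vt a ∧
        (fun e : {e : E // e ∈ F} => ((abel a e.1 : ℤ) : ZMod t)) = α} : ℂ) =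
      (1 / (t : ℂ) ^ F.card) *
        ∑ γ : {e : E // e ∈ F} → ZMod t,
          zetat t ^ (-(((∑ e : {e : E // e ∈ F}, γ e * α e).val : ℤ))) *
            Matrix.trace ((twistedVertAdj vs vt t (extF F γ)) ^ l) := by
  let ψ : AddChar (ZMod t) ℂ := ZMod.stdAddChar
  let x (a : ZMod l → E × Bool) (e : {e : E // e ∈ F}) : ZMod t := (abel a e.1 : ZMod t)
  have hphase (γ : {e : E // e ∈ F} → ZMod t) :
      zetat t ^ (-(((∑ e, γ e * α e).val : ℤ))) = ψ (-∑ e, γ e * α e) := by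
    rw [zetat_zpow]
    push_cast [ZMod.natCast_zmod_val]
    rfl
  have htrace (γ : {e : E // e ∈ F} → ZMod t) :
      trace (twistedVertAdj vs vt t (extF F γ) ^ l) =
        ∑ a, if IsClosedWalk vs vt a then ψ (∑ e, γ e * x a e) else 0 := by
    simp_rw [trace_twistedVertAdj_pow, sum_extF_mul]
    rfl
  have hT : (t : ℂ) ^ F.card ≠ 0 := pow_ne_zero _ (Nat.cast_ne_zero.2 (NeZero.ne t))
  calc (Fintype.card {a // IsClosedWalk vs vt a ∧ x a = α} : ℂ)
      = ∑ a, if IsClosedWalk vs vt a ∧ x a = α then 1 else 0 := by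
        rw [Fintype.card_subtype, Finset.card_filter]
        push_cast
        rfl
    _ = ∑ a, ∑ γ : {e : E // e ∈ F} → ZMod t, 1 / (t : ℂ) ^ F.card *
          (ψ (-∑ e, γ e * α e) * if IsClosedWalk vs vt a then ψ (∑ e, γ e * x a e) else 0) := by
        refine Finset.sum_congr rfl fun a _ => ?_
        by_cases hclosed : IsClosedWalk vs vt a
        · simp only [if_pos hclosed, and_iff_right hclosed]
          rw [← Finset.mul_sum,
            AddChar.sum_neg_mulShift_mul_mulShift (ZMod.isPrimitive_stdAddChar t), ZMod.card,
            Fintype.card_coe]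
          split_ifs <;> simp [hT]
        · simp [hclosed]
    _ = _ := by
        simp_rw [hphase, htrace, Finset.mul_sum, mul_ite, mul_zero]
        rw [Finset.sum_comm]

theorem stmt8 {V E : Type} [Fintype V] [Fintype E] [DecidableEq V] [DecidableEq E]
    (vs vt : E → V) (t : ℕ) [NeZero t] (ht : 2 ≤ t)
    (F : Finset E) (α : {e : E // e ∈ F} → ZMod t) (l : ℕ) [NeZero l] :
    (Fintype.card {a : ZMod l → E × Bool // IsClosedWalk vs vt a ∧
        (fun e : {e : E // e ∈ F} => ((abel a e.1 : ℤ) : ZMod t)) = α} : ℂ) =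
      (1 / (t : ℂ) ^ F.card) *
        ∑ γ : {e : E // e ∈ F} → ZMod t,
          zetat t ^ (-(((∑ e : {e : E // e ∈ F}, γ e * α e).val : ℤ))) *
            Matrix.trace ((twistedVertAdj vs vt t (extF F γ)) ^ l) :=
  stmt8_general vs vt t F α l
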